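/- (Series of type IV, top coefficient.) Suppose given pairwise commuting elements X^{(r)} ∈ F_{r−1} A for all r ≥ 1, and set X^{(0)} := 0. Let X_IV^{(r)} be the u^{−r}-coefficient of the product ∏_{i=1}^{p} (Σ_{s≥0} X^{(s)} (u−(i−1))^{−s}). Then: X_IV^{(r)} = 0 for r < p; X_IV^{(p)} = (X^{(1)})^p ∈ F_0 A; if r > p and p ∣ r then X_IV^{(r)} ∈ F_{r−p} A and X_IV^{(r)} − (X^{(r/p)})^p ∈ F_{r−p−1} A; and if r > p and p ∤ r then X_IV^{(r)} ∈ F_{r−p−1} A. -/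

import Mathlib

/-!
Each factor `Σ_s X^{(s)} (u - c)^{-s}` agrees with `X(u) := Σ_s X^{(s)} u^{-s}` up to one step
lower in the filtration of `A[[u⁻¹]]` induced by `F` with `u⁻¹` in degree `-1`: the shift only adds
multiples of `X^{(s)}`, `s < t`, to the `u^{-t}`-coefficient. Hence the product of the `p` factors
lies in step `-p` and differs from `X(u)^p` by an element of step `-p-1`. As the `X^{(s)}` commute
and `p = 0` in `A`, Frobenius gives `X(u)^p = Σ_r (X^{(r)})^p u^{-rp}`, and all four claims follow.
-/

/-- Given the coefficient sequence `a` of a series `f(u) = Σ_s a_s u^{-s}`, this is the series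
`f(u - c) = Σ_t (Σ_{s ≤ t} C(t-1, t-s) c^{t-s} a_s) u^{-t}`, as a power series in `u⁻¹`. -/
noncomputable def shiftSer (A : Type) [Ring A] (c : ℕ) (a : ℕ → A) : PowerSeries A :=
  PowerSeries.mk fun t =>
    ∑ s ∈ Finset.range (t + 1), (Nat.choose (t - 1) (t - s) * c ^ (t - s)) • a s

open PowerSeries

section Filtration

variable {k A : Type*} [Ring k] [Ring A] [Module k A] {F : ℕ → Submodule k A}

def filtZ (F : ℕ → Submodule k A) (i : ℤ) : Submodule k A :=
  if 0 ≤ i then F i.toNat else ⊥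

theorem filtZ_of_eq {i : ℤ} {n : ℕ} (h : i = n) : filtZ F i = F n := by
  simp [filtZ, h]

theorem eq_zero_of_mem_filtZ {i : ℤ} (hi : i < 0) {x : A} (hx : x ∈ filtZ F i) : x = 0 := by
  simpa [filtZ, hi.not_ge] using hx

theorem filtZ_mono (hmono : Monotone F) : Monotone (filtZ F) := by
  intro i j hij
  unfold filtZ
  split_ifs with hi hj hj
  · exact hmono (Int.toNat_le_toNat hij)
  · omega
  all_goals exact bot_le

theorem mul_mem_filtZ (hmul : ∀ r s : ℕ, ∀ x y : A, x ∈ F r → y ∈ F s → x * y ∈ F (r + s))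
    {i j : ℤ} {x y : A} (hx : x ∈ filtZ F i) (hy : y ∈ filtZ F j) : x * y ∈ filtZ F (i + j) := by
  rcases lt_or_ge i 0 with hi | hi
  · simp [eq_zero_of_mem_filtZ hi hx]
  rcases lt_or_ge j 0 with hj | hj
  · simp [eq_zero_of_mem_filtZ hj hy]
  rw [filtZ_of_eq (Int.toNat_of_nonneg hi).symm] at hx
  rw [filtZ_of_eq (Int.toNat_of_nonneg hj).symm] at hy
  rw [filtZ_of_eq (n := i.toNat + j.toNat) (by omega)]
  exact hmul _ _ _ _ hx hy

/-- `X` plays the role of `u⁻¹`, so `coeff t f` is the `u^{-t}`-coefficient; this is step `-d`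
of the filtration of `A[[u⁻¹]]` in which `u⁻¹` has degree `-1`. -/
def seriesFilt (F : ℕ → Submodule k A) (d : ℤ) : AddSubgroup A⟦X⟧ where
  carrier := {f | ∀ t : ℕ, coeff t f ∈ filtZ F (t - d)}
  zero_mem' _ := by simp
  add_mem' hf hg t := by simpa using add_mem (hf t) (hg t)
  neg_mem' hf t := by simpa using neg_mem (hf t)

theorem coeff_eq_zero_of_mem_seriesFilt {d : ℤ} {f : A⟦X⟧} (hf : f ∈ seriesFilt F d) {t : ℕ}
    (ht : (t : ℤ) < d) : coeff t f = 0 :=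
  eq_zero_of_mem_filtZ (by omega) (hf t)

theorem coeff_mem_of_mem_seriesFilt {d : ℤ} {f : A⟦X⟧} (hf : f ∈ seriesFilt F d) {t n : ℕ}
    (h : (t : ℤ) - d = n) : coeff t f ∈ F n :=
  (filtZ_of_eq (F := F) h) ▸ hf t

theorem seriesFilt_anti (hmono : Monotone F) : Antitone (seriesFilt F) :=
  fun _ _ hde _ hf t => filtZ_mono hmono (by omega) (hf t)

theorem one_mem_seriesFilt_zero (hone : (1 : A) ∈ F 0) : (1 : A⟦X⟧) ∈ seriesFilt F 0 := by
  intro t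
  rw [coeff_one]
  split_ifs with ht
  · rw [filtZ_of_eq (n := 0) (by omega)]
    exact hone
  · exact zero_mem _

variable (hmono : Monotone F) (hmul : ∀ r s : ℕ, ∀ x y : A, x ∈ F r → y ∈ F s → x * y ∈ F (r + s))
include hmono hmul

theorem mul_mem_seriesFilt {a b : ℤ} {f g : A⟦X⟧} (hf : f ∈ seriesFilt F a)
    (hg : g ∈ seriesFilt F b) : f * g ∈ seriesFilt F (a + b) := by
  intro t
  rw [coeff_mul]
  refine Submodule.sum_mem _ fun ij hij => ?_
  rw [Finset.HasAntidiagonal.mem_antidiagonal] at hij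
  exact filtZ_mono hmono (by omega) (mul_mem_filtZ hmul (hf ij.1) (hg ij.2))

theorem list_prod_mem_seriesFilt (hone : (1 : A) ∈ F 0) {a : ℤ} {l : List A⟦X⟧}
    (hl : ∀ f ∈ l, f ∈ seriesFilt F a) : l.prod ∈ seriesFilt F (l.length * a) := by
  induction l with
  | nil => simpa using one_mem_seriesFilt_zero hone
  | cons f l ih =>
    simp only [List.forall_mem_cons] at hl
    rw [List.prod_cons]
    exact seriesFilt_anti hmono (by simp only [List.length_cons]; push_cast; linarith)
      (mul_mem_seriesFilt hmono hmul hl.1 (ih hl.2))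

theorem list_prod_sub_pow_mem_seriesFilt (hone : (1 : A) ∈ F 0) {a b : ℤ} {l : List A⟦X⟧}
    {g : A⟦X⟧} (hl : ∀ f ∈ l, f ∈ seriesFilt F a) (hg : g ∈ seriesFilt F a)
    (hlg : ∀ f ∈ l, f - g ∈ seriesFilt F b) :
    l.prod - g ^ l.length ∈ seriesFilt F ((l.length - 1) * a + b) := by
  induction l with
  | nil => simp
  | cons f l ih =>
    simp only [List.forall_mem_cons] at hl hlg
    have htelescope : (f :: l).prod - g ^ (f :: l).length
        = (f - g) * l.prod + g * (l.prod - g ^ l.length) := by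
      rw [List.prod_cons, List.length_cons, pow_succ']
      noncomm_ring
    rw [htelescope]
    refine add_mem (seriesFilt_anti hmono (le_of_eq ?_) (mul_mem_seriesFilt hmono hmul hlg.1
      (list_prod_mem_seriesFilt hmono hmul hone hl.2)))
      (seriesFilt_anti hmono (le_of_eq ?_) (mul_mem_seriesFilt hmono hmul hg (ih hl.2 hlg.2)))
    all_goals simp only [List.length_cons]; push_cast; ring

end Filtration

section ShiftedSeries

variable {k : Type*} {A : Type} [Ring k] [Ring A] [Module k A] {F : ℕ → Submodule k A}

theorem coeff_shiftSer (c : ℕ) (a : ℕ → A) (t : ℕ) :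
    coeff t (shiftSer A c a) =
      ∑ s ∈ Finset.range t, (Nat.choose (t - 1) (t - s) * c ^ (t - s)) • a s + a t := by
  rw [shiftSer, coeff_mk, Finset.sum_range_succ, Nat.sub_self, Nat.choose_zero_right, pow_zero,
    mul_one, one_smul]

theorem mk_mem_seriesFilt_one {a : ℕ → A} (ha0 : a 0 = 0)
    (ha : ∀ r : ℕ, 1 ≤ r → a r ∈ F (r - 1)) : mk a ∈ seriesFilt F 1 := by
  intro t
  rw [coeff_mk]
  rcases Nat.eq_zero_or_pos t with rfl | ht
  · simp [ha0]
  · rw [filtZ_of_eq (n := t - 1) (by omega)]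
    exact ha t ht

variable (hmono : Monotone F)
include hmono

/-- The shift `u ↦ u - c` adds to the `u^{-t}`-coefficient only multiples of `a s` with `s < t`. -/
theorem shiftSer_sub_mk_mem_seriesFilt_two {a : ℕ → A} (ha : mk a ∈ seriesFilt F 1) (c : ℕ) :
    shiftSer A c a - mk a ∈ seriesFilt F 2 := by
  intro t
  rw [map_sub, coeff_shiftSer, coeff_mk, add_sub_cancel_right]
  refine Submodule.sum_mem _ fun s hs => nsmul_mem ?_ _
  have has := ha s
  rw [coeff_mk] at has
  exact filtZ_mono hmono (by simp only [Finset.mem_range] at hs; omega) has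

theorem shiftSer_mem_seriesFilt_one {a : ℕ → A} (ha : mk a ∈ seriesFilt F 1) (c : ℕ) :
    shiftSer A c a ∈ seriesFilt F 1 := by
  simpa using add_mem (seriesFilt_anti hmono (by norm_num)
    (shiftSer_sub_mk_mem_seriesFilt_two hmono ha c)) ha

end ShiftedSeries

theorem PowerSeries.coeff_pow_prime_of_natCast_eq_zero {R : Type*} [CommRing R] {p : ℕ}
    [hp : Fact p.Prime] (hpR : (p : R) = 0) (f : R⟦X⟧) (n : ℕ) :
    coeff n (f ^ p) = if p ∣ n then coeff (n / p) f ^ p else 0 := by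
  nontriviality R
  have : CharP R p := (CharP.charP_iff_prime_eq_zero hp.out).mpr hpR
  rw [← MvPowerSeries.map_frobenius_expand p hp.out.ne_zero, ← PowerSeries.expand,
    ← PowerSeries.map, coeff_map, coeff_expand]
  split_ifs
  · rfl
  · exact map_zero _

open scoped IsMulCommutative in
/-- Pairwise commuting coefficients generate a commutative subring, where Frobenius applies. -/
theorem PowerSeries.coeff_mk_pow_prime_of_commute {A : Type*} [Ring A] {p : ℕ} [Fact p.Prime]
    (hpA : (p : A) = 0) {a : ℕ → A} (ha : ∀ r s, Commute (a r) (a s)) (n : ℕ) :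
    coeff n (mk a ^ p) = if p ∣ n then a (n / p) ^ p else 0 := by
  let B := Subring.closure (Set.range a)
  have : IsMulCommutative B := Subring.isMulCommutative_closure (by
    rintro _ ⟨r, rfl⟩ _ ⟨s, rfl⟩
    exact ha r s)
  let b : ℕ → B := fun r => ⟨a r, Subring.subset_closure ⟨r, rfl⟩⟩
  have hpB : (p : B) = 0 := Subtype.ext (by simpa using hpA)
  have hab : mk a = map B.subtype (mk b) := by
    ext r
    simp [b]
  rw [hab, ← map_pow, coeff_map, coeff_pow_prime_of_natCast_eq_zero hpB]
  split_ifs <;> simp [b]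

/-- **series of type IV, top coefficient.** Let `X^{(r)} ∈ F_{r-1} A`
(`r ≥ 1`) be commuting elements, `X^{(0)} = 0`, and `X_IV^{(r)}` the `u^{-r}`-coefficient of
`∏_{i=1}^{p} Σ_s X^{(s)} (u-(i-1))^{-s}`. Then `X_IV^{(r)} = 0` for `r < p`;
`X_IV^{(p)} = (X^{(1)})^p ∈ F_0 A`; if `r > p`, `p ∣ r`: `X_IV^{(r)} ∈ F_{r-p} A` and
`X_IV^{(r)} ≡ (X^{(r/p)})^p mod F_{r-p-1} A`; if `r > p`, `p ∤ r`:
`X_IV^{(r)} ∈ F_{r-p-1} A`. -/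
theorem typeIV_series
    (k : Type) [Field k] (p : ℕ) [Fact p.Prime] [CharP k p]
    (A : Type) [Ring A] [Algebra k A]
    (F : ℕ → Submodule k A) (hmono : Monotone F) (hone : (1 : A) ∈ F 0)
    (hmul : ∀ r s : ℕ, ∀ x y : A, x ∈ F r → y ∈ F s → x * y ∈ F (r + s))
    (X : ℕ → A) (hX0 : X 0 = 0)
    (hXcomm : ∀ r s : ℕ, X r * X s = X s * X r)
    (hXF : ∀ r : ℕ, 1 ≤ r → X r ∈ F (r - 1)) :
    (∀ r : ℕ, r < p →
      PowerSeries.coeff r (((List.range p).map fun m => shiftSer A m X).prod) = 0) ∧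
    (PowerSeries.coeff p (((List.range p).map fun m => shiftSer A m X).prod) = (X 1) ^ p ∧
      (X 1) ^ p ∈ F 0) ∧
    (∀ r : ℕ, p < r → p ∣ r →
      PowerSeries.coeff r (((List.range p).map fun m => shiftSer A m X).prod) ∈ F (r - p) ∧
      PowerSeries.coeff r (((List.range p).map fun m => shiftSer A m X).prod)
        - (X (r / p)) ^ p ∈ F (r - p - 1)) ∧
    (∀ r : ℕ, p < r → ¬ p ∣ r →
      PowerSeries.coeff r (((List.range p).map fun m => shiftSer A m X).prod)
        ∈ F (r - p - 1)) := by
  have hpA : (p : A) = 0 := by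
    rw [← map_natCast (algebraMap k A), CharP.cast_eq_zero, map_zero]
  have hX : mk X ∈ seriesFilt F 1 := mk_mem_seriesFilt_one hX0 hXF
  set l := (List.range p).map fun m => shiftSer A m X
  have hlen : l.length = p := by simp [l]
  have hl : ∀ f ∈ l, f ∈ seriesFilt F 1 := by
    simpa [l] using fun m _ => shiftSer_mem_seriesFilt_one hmono hX m
  have hprod : l.prod ∈ seriesFilt F p := by
    simpa [hlen] using list_prod_mem_seriesFilt hmono hmul hone hl
  have hdiff : l.prod - mk X ^ p ∈ seriesFilt F (p + 1) := by
    have h := list_prod_sub_pow_mem_seriesFilt hmono hmul hone hl hX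
      (by simpa [l] using fun m _ => shiftSer_sub_mk_mem_seriesFilt_two hmono hX m)
    rw [hlen] at h
    exact seriesFilt_anti hmono (by omega) h
  have hcoeff (r : ℕ) :
      coeff r l.prod - (if p ∣ r then X (r / p) ^ p else 0) ∈ filtZ F (r - (p + 1)) := by
    simpa [coeff_mk_pow_prime_of_commute hpA hXcomm] using hdiff r
  have htop : coeff p l.prod = X 1 ^ p := by
    have h := hcoeff p
    rw [if_pos dvd_rfl, Nat.div_self (Nat.Prime.pos Fact.out)] at h
    exact sub_eq_zero.mp (eq_zero_of_mem_filtZ (by omega) h)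
  refine ⟨fun r hr => coeff_eq_zero_of_mem_seriesFilt hprod (by omega),
    ⟨htop, htop ▸ coeff_mem_of_mem_seriesFilt hprod (by simp)⟩,
    fun r hr hdvd => ⟨coeff_mem_of_mem_seriesFilt hprod (by omega), ?_⟩, fun r hr hndvd => ?_⟩
  · have h := hcoeff r
    rwa [if_pos hdvd, filtZ_of_eq (n := r - p - 1) (by omega)] at h
  · have h := hcoeff r
    rwa [if_neg hndvd, sub_zero, filtZ_of_eq (n := r - p - 1) (by omega)] at h
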